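/- Let T be a Tambara functor on a finite group G such that T(X) is a Noetherian ring for every transitive finite G-set X. Then every ascending chain of ideals 𝔦_1 ⊆ 𝔦_2 ⊆ 𝔦_3 ⊆ ⋯ of T stabilizes. -/

import Mathlib

set_option autoImplicit false

/-! Finite G-sets -/

structure GSet (G : Type) [Group G] : Type 1 where
  carrier : Type
  [mulAction : MulAction G carrier]
  [finite : Finite carrier]

attribute [instance] GSet.mulAction GSet.finite

/-- Equivariant maps of finite `G`-sets. -/
structure GSetHom {G : Type} [Group G] (X Y : GSet G) : Type where
  toFun : X.carrier → Y.carrier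
  map_smul : ∀ (g : G) (x : X.carrier), toFun (g • x) = g • toFun x

namespace GSetHom

variable {G : Type} [Group G]

def id (X : GSet G) : GSetHom X X := ⟨fun x => x, fun _ _ => rfl⟩

def comp {X Y Z : GSet G} (g : GSetHom Y Z) (f : GSetHom X Y) : GSetHom X Z :=
  ⟨fun x => g.toFun (f.toFun x), fun a x => by
    show g.toFun (f.toFun (a • x)) = a • g.toFun (f.toFun x)
    rw [f.map_smul, g.map_smul]⟩

end GSetHom

namespace GSet

variable {G : Type} [Group G]

/-- Binary disjoint union of `G`-sets. -/
def sum (X Y : GSet G) : GSet G where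
  carrier := X.carrier ⊕ Y.carrier

def inl (X Y : GSet G) : GSetHom X (X.sum Y) := ⟨Sum.inl, fun _ _ => rfl⟩

def inr (X Y : GSet G) : GSetHom Y (X.sum Y) := ⟨Sum.inr, fun _ _ => rfl⟩

instance : MulAction G Empty where
  smul _ x := x.elim
  one_smul x := x.elim
  mul_smul _ _ x := x.elim

/-- The empty `G`-set. -/
def empty (G : Type) [Group G] : GSet G where
  carrier := Empty

/-- Finite disjoint unions of `G`-sets. -/
def sigma {n : ℕ} (Xs : Fin n → GSet G) : GSet G where
  carrier := Σ i, (Xs i).carrier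

def sigmaIncl {n : ℕ} (Xs : Fin n → GSet G) (i : Fin n) : GSetHom (Xs i) (sigma Xs) :=
  ⟨fun x => ⟨i, x⟩, fun _ _ => rfl⟩

/-- The canonical pullback of two `G`-maps. -/
def pullback {X Y Z : GSet G} (f : GSetHom X Z) (g : GSetHom Y Z) : GSet G where
  carrier := { q : X.carrier × Y.carrier // f.toFun q.1 = g.toFun q.2 }
  mulAction :=
  { smul := fun a q => ⟨a • q.val, by
      show f.toFun (a • q.val.1) = g.toFun (a • q.val.2)
      rw [f.map_smul, g.map_smul, q.property]⟩
    one_smul := fun q => Subtype.ext (one_smul G q.val)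
    mul_smul := fun a b q => Subtype.ext (mul_smul a b q.val) }

def pbFst {X Y Z : GSet G} (f : GSetHom X Z) (g : GSetHom Y Z) :
    GSetHom (pullback f g) X := ⟨fun q => q.val.1, fun _ _ => rfl⟩

def pbSnd {X Y Z : GSet G} (f : GSetHom X Z) (g : GSetHom Y Z) :
    GSetHom (pullback f g) Y := ⟨fun q => q.val.2, fun _ _ => rfl⟩

/-- The complement of the image of a `G`-map, as a `G`-set. -/
def compl {X Y : GSet G} (f : GSetHom X Y) : GSet G where
  carrier := { y : Y.carrier // ∀ x, f.toFun x ≠ y }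
  mulAction :=
  { smul := fun g y => ⟨g • y.val, fun x h => y.property (g⁻¹ • x) (by
      rw [f.map_smul, h, inv_smul_smul])⟩
    one_smul := fun y => Subtype.ext (one_smul G y.val)
    mul_smul := fun a b y => Subtype.ext (mul_smul a b y.val) }

def complIncl {X Y : GSet G} (f : GSetHom X Y) : GSetHom (compl f) Y :=
  ⟨fun y => y.val, fun _ _ => rfl⟩

/-- Points of Tambara's dependent product `Π_f(A)`: pairs `(y, σ)` of a point `y : Y`
and a section `σ` of `p` on the fiber `f⁻¹(y)` (encoded as an `Option`-valued function
supported exactly on the fiber). -/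
def PiProp {X Y A : GSet G} (f : GSetHom X Y) (p : GSetHom A X)
    (s : Y.carrier × (X.carrier → Option A.carrier)) : Prop :=
  (∀ x, (s.2 x).isSome = true ↔ f.toFun x = s.1) ∧
  (∀ x a, s.2 x = some a → p.toFun a = x)

def PiCar {X Y A : GSet G} (f : GSetHom X Y) (p : GSetHom A X) : Type :=
  { s : Y.carrier × (X.carrier → Option A.carrier) // PiProp f p s }

instance optionFinite {α : Type} [Finite α] : Finite (Option α) :=
  Finite.of_equiv _ (Equiv.optionEquivSumPUnit.{0,0} α).symm

instance piFinite {X Y A : GSet G} (f : GSetHom X Y) (p : GSetHom A X) :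
    Finite (PiCar f p) := by
  unfold PiCar; infer_instance

def piSmul {X Y A : GSet G} (f : GSetHom X Y) (p : GSetHom A X) (g : G)
    (s : PiCar f p) : PiCar f p :=
  ⟨(g • s.val.1, fun x => (s.val.2 (g⁻¹ • x)).map (g • ·)), by
    constructor
    · intro x
      rw [Option.isSome_map, s.property.1 (g⁻¹ • x), f.map_smul]
      constructor
      · intro h; rw [← h, smul_inv_smul]
      · intro h; rw [h, inv_smul_smul]
    · intro x a ha
      rcases Option.map_eq_some_iff.mp ha with ⟨b, hb, rfl⟩
      rw [p.map_smul, s.property.2 _ _ hb, smul_inv_smul]⟩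

instance piAction {X Y A : GSet G} (f : GSetHom X Y) (p : GSetHom A X) :
    MulAction G (PiCar f p) where
  smul := piSmul f p
  one_smul s := by
    apply Subtype.ext
    refine Prod.ext (one_smul G s.val.1) ?_
    funext x
    show (s.val.2 ((1:G)⁻¹ • x)).map ((1:G) • ·) = s.val.2 x
    rw [inv_one, one_smul]
    cases h : s.val.2 x <;> simp [one_smul]
  mul_smul a b s := by
    apply Subtype.ext
    refine Prod.ext (mul_smul a b s.val.1) ?_
    funext x
    show (s.val.2 ((a * b)⁻¹ • x)).map ((a * b) • ·)
        = ((s.val.2 (b⁻¹ • (a⁻¹ • x))).map (b • ·)).map (a • ·)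
    rw [Option.map_map, mul_inv_rev, mul_smul]
    cases h : s.val.2 (b⁻¹ • a⁻¹ • x) <;> simp [mul_smul, Function.comp]

/-- Tambara's dependent product `Π_f(A)` as a `G`-set. -/
def piObj {X Y A : GSet G} (f : GSetHom X Y) (p : GSetHom A X) : GSet G where
  carrier := PiCar f p

/-- The projection `π : Π_f(A) → Y`. -/
def piPr {X Y A : GSet G} (f : GSetHom X Y) (p : GSetHom A X) :
    GSetHom (piObj f p) Y := ⟨fun s => s.val.1, fun _ _ => rfl⟩

theorem optGet {α : Type} {o : Option α} {a : α} (h : o = some a) :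
    ∀ hs : o.isSome = true, o.get hs = a := by subst h; intro _; rfl

/-- The evaluation map `λ : X ×_Y Π_f(A) → A`, `(x, (y, σ)) ↦ σ(x)`. -/
def piEval {X Y A : GSet G} (f : GSetHom X Y) (p : GSetHom A X) :
    GSetHom (pullback f (piPr f p)) A where
  toFun z := (z.val.2.val.2 z.val.1).get (by
    rw [z.val.2.property.1 z.val.1]; exact z.property)
  map_smul g z := by
    have hs : (z.val.2.val.2 z.val.1).isSome = true := by
      rw [z.val.2.property.1 z.val.1]; exact z.property
    obtain ⟨a, ha⟩ := Option.isSome_iff_exists.mp hs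
    have h1 : z.val.2.val.2 z.val.1 = some a := ha
    have h2 : (g • z).val.2.val.2 (g • z).val.1 = some (g • a) := by
      show (z.val.2.val.2 (g⁻¹ • (g • z.val.1))).map (g • ·) = some (g • a)
      rw [inv_smul_smul, h1]; rfl
    simp only [optGet h2, optGet h1]

end GSet

namespace GSet

/-- A transitive (nonempty) finite `G`-set. -/
def IsTransitive {G : Type} [Group G] (X : GSet G) : Prop :=
  Nonempty X.carrier ∧ MulAction.IsPretransitive G X.carrier

end GSet

/-! Tambara functors -/

/-- The underlying system of commutative rings of a Tambara functor. -/
structure TamData (G : Type) [Group G] : Type 1 where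
  obj : GSet G → Type
  ring : ∀ X, CommRing (obj X)

attribute [instance] TamData.ring

/-- A Tambara functor on the finite group `G`: a system of commutative rings `obj X`
indexed by finite `G`-sets, together with restrictions `res`, additive transfers `tr`
and multiplicative transfers `nm`, functorial, additive, satisfying the Mackey
base-change conditions, the projection formula, and Tambara's distributive law. -/
structure TambaraFunctor (G : Type) [Group G] extends TamData G where
  res : ∀ {X Y : GSet G}, GSetHom X Y → (obj Y →+* obj X)
  tr : ∀ {X Y : GSet G}, GSetHom X Y → (obj X →+ obj Y)
  nm : ∀ {X Y : GSet G}, GSetHom X Y → (obj X →* obj Y)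
  res_id : ∀ {X : GSet G} (x : obj X), res (GSetHom.id X) x = x
  res_comp : ∀ {X Y Z : GSet G} (f : GSetHom X Y) (g : GSetHom Y Z) (z : obj Z),
    res f (res g z) = res (g.comp f) z
  tr_id : ∀ {X : GSet G} (x : obj X), tr (GSetHom.id X) x = x
  tr_comp : ∀ {X Y Z : GSet G} (f : GSetHom X Y) (g : GSetHom Y Z) (x : obj X),
    tr g (tr f x) = tr (g.comp f) x
  nm_id : ∀ {X : GSet G} (x : obj X), nm (GSetHom.id X) x = x
  nm_comp : ∀ {X Y Z : GSet G} (f : GSetHom X Y) (g : GSetHom Y Z) (x : obj X),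
    nm g (nm f x) = nm (g.comp f) x
  /-- additivity on binary disjoint unions -/
  add_bij : ∀ X Y : GSet G, Function.Bijective
    (fun t : obj (X.sum Y) => (res (GSet.inl X Y) t, res (GSet.inr X Y) t))
  /-- `T(∅)` is the zero ring -/
  empty_subsingleton : ∀ x y : obj (GSet.empty G), x = y
  /-- Mackey base change for the additive transfer -/
  tr_bc : ∀ {X Y Z : GSet G} (f : GSetHom X Z) (g : GSetHom Y Z) (x : obj X),
    res g (tr f x) = tr (GSet.pbSnd f g) (res (GSet.pbFst f g) x)
  /-- Mackey base change for the multiplicative transfer -/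
  nm_bc : ∀ {X Y Z : GSet G} (f : GSetHom X Z) (g : GSetHom Y Z) (x : obj X),
    res g (nm f x) = nm (GSet.pbSnd f g) (res (GSet.pbFst f g) x)
  /-- the projection formula -/
  proj_formula : ∀ {X Y : GSet G} (f : GSetHom X Y) (a : obj X) (b : obj Y),
    tr f (a * res f b) = tr f a * b
  /-- the norm of zero is the additive transfer of `1` from the complement of the image -/
  nm_zero : ∀ {X Y : GSet G} (f : GSetHom X Y), nm f (0 : obj X) = tr (GSet.complIncl f) 1
  /-- Tambara's distributive law, via the canonical exponential diagram on `Π_f(A)` -/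
  distrib : ∀ {X Y A : GSet G} (f : GSetHom X Y) (p : GSetHom A X) (a : obj A),
    nm f (tr p a) = tr (GSet.piPr f p)
      (nm (GSet.pbSnd f (GSet.piPr f p)) (res (GSet.piEval f p) a))

namespace TambaraFunctor

variable {G : Type} [Group G]

/-- `f_!(x) = f_•(x) - f_•(0)`. -/
def shriek (T : TambaraFunctor G) {X Y : GSet G} (f : GSetHom X Y) (x : T.obj X) :
    T.obj Y := T.nm f x - T.nm f 0

end TambaraFunctor

/-- A morphism of Tambara functors: a family of ring homomorphisms natural with respect
to restrictions, additive transfers and multiplicative transfers. -/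
structure TamHom {G : Type} [Group G] (T S : TambaraFunctor G) where
  app : ∀ X : GSet G, T.obj X →+* S.obj X
  app_res : ∀ {X Y : GSet G} (f : GSetHom X Y) (y : T.obj Y),
    app X (T.res f y) = S.res f (app Y y)
  app_tr : ∀ {X Y : GSet G} (f : GSetHom X Y) (x : T.obj X),
    app Y (T.tr f x) = S.tr f (app X x)
  app_nm : ∀ {X Y : GSet G} (f : GSetHom X Y) (x : T.obj X),
    app Y (T.nm f x) = S.nm f (app X x)

namespace TambaraFunctor

variable {G : Type} [Group G]

/-- An ideal of a Tambara functor: a family of ideals closed under restrictions,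
additive transfers, and satisfying `f_•(𝔦(X)) ⊆ f_•(0) + 𝔦(Y)`
(equivalently, closed under `f_!`). -/
structure IsIdeal (T : TambaraFunctor G) (I : ∀ X : GSet G, Ideal (T.obj X)) : Prop where
  res_mem : ∀ {X Y : GSet G} (f : GSetHom X Y) {y : T.obj Y}, y ∈ I Y → T.res f y ∈ I X
  tr_mem : ∀ {X Y : GSet G} (f : GSetHom X Y) {x : T.obj X}, x ∈ I X → T.tr f x ∈ I Y
  shriek_mem : ∀ {X Y : GSet G} (f : GSetHom X Y) {x : T.obj X},
    x ∈ I X → T.shriek f x ∈ I Y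

/-- The ideal generated by a family of subsets: the intersection of all ideals
containing it. -/
def gen (T : TambaraFunctor G) (S : ∀ X : GSet G, Set (T.obj X)) (X : GSet G) :
    Ideal (T.obj X) :=
  ⨅ (I : ∀ Y : GSet G, Ideal (T.obj Y)) (_ : T.IsIdeal I) (_ : ∀ Y, S Y ⊆ ↑(I Y)), I X

/-- The family of subsets consisting of the single element `a ∈ T(A)`. -/
def single (T : TambaraFunctor G) (A : GSet G) (a : T.obj A) (X : GSet G) :
    Set (T.obj X) := { x | ∃ h : A = X, h ▸ a = x }

/-- The principal ideal `⟨a⟩` generated by `a ∈ T(A)`. -/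
def principal (T : TambaraFunctor G) (A : GSet G) (a : T.obj A) :
    ∀ X : GSet G, Ideal (T.obj X) := T.gen (T.single A a)

/-- The defining set of the product of two ideals. -/
def mulSet (T : TambaraFunctor G) (I J : ∀ X : GSet G, Ideal (T.obj X)) (X : GSet G) :
    Set (T.obj X) :=
  { x | ∃ (A : GSet G) (p : GSetHom A X) (a b : T.obj A),
      a ∈ I A ∧ b ∈ J A ∧ x = T.tr p (a * b) }

/-- The product of two ideals of a Tambara functor. -/
def mulIdl (T : TambaraFunctor G) (I J : ∀ X : GSet G, Ideal (T.obj X)) (X : GSet G) :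
    Ideal (T.obj X) := Ideal.span (T.mulSet I J X)

/-- Iterated products of ideals. -/
def mulMulti (T : TambaraFunctor G) :
    List (∀ X : GSet G, Ideal (T.obj X)) → ∀ X : GSet G, Ideal (T.obj X)
  | [] => fun _ => ⊤
  | I :: ls => T.mulIdl I (T.mulMulti ls)

/-- A prime ideal of a Tambara functor. -/
structure IsPrime (T : TambaraFunctor G) (P : ∀ X : GSet G, Ideal (T.obj X)) : Prop where
  isIdeal : T.IsIdeal P
  ne_top : ∃ X : GSet G, P X ≠ ⊤
  mem_or_mem : ∀ {X Y : GSet G}, X.IsTransitive → Y.IsTransitive →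
    ∀ {a : T.obj X} {b : T.obj Y},
      (∀ Z : GSet G, T.mulIdl (T.principal X a) (T.principal Y b) Z ≤ P Z) →
      a ∈ P X ∨ b ∈ P Y

/-- A maximal ideal of a Tambara functor. -/
structure IsMaximal (T : TambaraFunctor G) (M : ∀ X : GSet G, Ideal (T.obj X)) : Prop where
  isIdeal : T.IsIdeal M
  ne_top : ∃ X : GSet G, M X ≠ ⊤
  eq_of_le : ∀ K : ∀ X : GSet G, Ideal (T.obj X), T.IsIdeal K →
    (∀ X, M X ≤ K X) → (K = M ∨ ∀ X, K X = ⊤)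

end TambaraFunctor

namespace GSet

/-- The `G`-set `G/e`, i.e. `G` with the left regular action. -/
def regular (G : Type) [Group G] [Finite G] : GSet G where
  carrier := G

/-- Right multiplication `G/e → G/e`, an equivariant map. -/
def rightMul {G : Type} [Group G] [Finite G] (g : G) :
    GSetHom (regular G) (regular G) :=
  ⟨fun x => (id x : G) * g, fun a x => mul_assoc a x g⟩

end GSet

/-!
An ideal `I` of a Tambara functor is determined by its values on transitive `G`-sets: splitting
`X = O ⊔ C` into an orbit and its complement, `t ∈ I(O ⊔ C)` as soon as both restrictions of `t`
lie in `I`, because `t` is recovered from them by transfers (Mackey base change along the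
summand inclusions). Every transitive `G`-set is isomorphic to some `G/H`, and `G` has only
finitely many subgroups, so an ascending chain of ideals is governed by finitely many ascending
chains in the Noetherian rings `T(G/H)`, which stabilize simultaneously.
-/

instance Pi.wellFoundedGT {ι : Type*} [Finite ι] {α : ι → Type*} [∀ i, Preorder (α i)]
    [∀ i, WellFoundedGT (α i)] : WellFoundedGT (∀ i, α i) :=
  @Pi.wellFoundedLT ι (fun i => (α i)ᵒᵈ) _ _ _

namespace GSetHom

variable {G : Type} [Group G] {X Y : GSet G}

theorem ext {f g : GSetHom X Y} (h : f.toFun = g.toFun) : f = g := by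
  cases f; cases g; cases h; rfl

theorem exists_inverse_of_bijective (f : GSetHom X Y) (hf : Function.Bijective f.toFun) :
    ∃ g : GSetHom Y X, g.comp f = GSetHom.id X ∧ f.comp g = GSetHom.id Y := by
  let e := Equiv.ofBijective f.toFun hf
  refine ⟨⟨e.symm, fun a y => e.injective ?_⟩, ext (funext e.symm_apply_apply),
    ext (funext e.apply_symm_apply)⟩
  change f.toFun (e.symm (a • y)) = f.toFun (a • e.symm y)
  rw [f.map_smul]
  exact (e.apply_symm_apply _).trans (congrArg (a • ·) (e.apply_symm_apply y).symm)

end GSetHom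

namespace GSet

variable {G : Type} [Group G]

def subtype (X : GSet G) (p : X.carrier → Prop) (hp : ∀ (g : G) y, p (g • y) ↔ p y) :
    GSet G where
  carrier := {y : X.carrier // p y}
  mulAction :=
  { smul := fun g y => ⟨g • y.1, (hp g y.1).2 y.2⟩
    one_smul := fun y => Subtype.ext (one_smul G y.1)
    mul_smul := fun a b y => Subtype.ext (mul_smul a b y.1) }

def sumSubtypeCompl (X : GSet G) (p : X.carrier → Prop) (hp : ∀ (g : G) y, p (g • y) ↔ p y) :
    GSetHom ((X.subtype p hp).sum (X.subtype (fun y => ¬p y) fun g y => not_congr (hp g y))) X :=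
  ⟨Sum.elim Subtype.val Subtype.val, by rintro g (y | y) <;> rfl⟩

theorem bijective_sumSubtypeCompl (X : GSet G) (p : X.carrier → Prop)
    (hp : ∀ (g : G) y, p (g • y) ↔ p y) : Function.Bijective (X.sumSubtypeCompl p hp).toFun := by
  classical
  exact (Equiv.sumCompl p).bijective

theorem isEmpty_or_isTransitive_or_exists_invariant (X : GSet G) :
    IsEmpty X.carrier ∨ X.IsTransitive ∨ ∃ p : X.carrier → Prop,
      (∀ (g : G) y, p (g • y) ↔ p y) ∧ (∃ y, p y) ∧ ∃ y, ¬p y := by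
  rcases isEmpty_or_nonempty X.carrier with hX | hX
  · exact Or.inl hX
  obtain ⟨x₀⟩ := hX
  by_cases horbit : ∀ y, y ∈ MulAction.orbit G x₀
  · exact Or.inr (Or.inl ⟨⟨x₀⟩, (MulAction.isPretransitive_iff_orbit_eq_univ x₀).2
      (Set.eq_univ_of_forall horbit)⟩)
  refine Or.inr (Or.inr ⟨(· ∈ MulAction.orbit G x₀), fun g y => ?_,
    ⟨x₀, MulAction.mem_orbit_self x₀⟩, not_forall.1 horbit⟩)
  simp only [← MulAction.orbit_eq_iff, MulAction.orbit_smul]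

def quotient [Finite G] (H : Subgroup G) : GSet G where
  carrier := G ⧸ H

theorem isTransitive_quotient [Finite G] (H : Subgroup G) : (quotient H).IsTransitive :=
  ⟨⟨(QuotientGroup.mk 1 : G ⧸ H)⟩, inferInstanceAs (MulAction.IsPretransitive G (G ⧸ H))⟩

theorem IsTransitive.exists_bijective_hom_quotient [Finite G] {Z : GSet G} (hZ : Z.IsTransitive) :
    ∃ (H : Subgroup G) (e : GSetHom (quotient H) Z), Function.Bijective e.toFun := by
  obtain ⟨⟨z⟩, hpre⟩ := hZ
  refine ⟨MulAction.stabilizer G z, ⟨MulAction.ofQuotientStabilizer G z,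
    MulAction.ofQuotientStabilizer_smul G z⟩, MulAction.injective_ofQuotientStabilizer G z,
    fun y => ?_⟩
  obtain ⟨g, rfl⟩ := hpre.exists_smul_eq z y
  exact ⟨(g : G ⧸ MulAction.stabilizer G z), MulAction.ofQuotientStabilizer_mk G z g⟩

theorem pbFst_self_eq_pbSnd {X Y : GSet G} {j : GSetHom X Y} (hj : Function.Injective j.toFun) :
    pbFst j j = pbSnd j j :=
  GSetHom.ext (funext fun q => hj q.property)

theorem bijective_pbSnd_self {X Y : GSet G} {j : GSetHom X Y} (hj : Function.Injective j.toFun) :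
    Function.Bijective (pbSnd j j).toFun := by
  refine ⟨fun q q' h => Subtype.ext (Prod.ext ?_ h), fun x => ⟨⟨(x, x), rfl⟩, rfl⟩⟩
  exact (hj q.property).trans (h.trans (hj q'.property).symm)

end GSet

namespace TambaraFunctor

variable {G : Type} [Group G] (T : TambaraFunctor G)

theorem subsingleton_obj {X : GSet G} (hX : IsEmpty X.carrier) : Subsingleton (T.obj X) := by
  let h : GSetHom X (GSet.empty G) := ⟨hX.elim, fun _ x => hX.elim x⟩
  let k : GSetHom (GSet.empty G) X := ⟨Empty.elim, fun _ x => x.elim⟩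
  have hkh : k.comp h = GSetHom.id X := GSetHom.ext (funext fun x => hX.elim x)
  refine ⟨fun a b => ?_⟩
  rw [← T.res_id a, ← T.res_id b, ← hkh, ← T.res_comp, ← T.res_comp,
    T.empty_subsingleton (T.res k a) (T.res k b)]

theorem isUnit_tr_one_of_bijective {P X : GSet G} (e : GSetHom P X)
    (he : Function.Bijective e.toFun) : IsUnit (T.tr e 1) := by
  obtain ⟨d, hde, hed⟩ := e.exists_inverse_of_bijective he
  refine IsUnit.of_mul_eq_one (T.res d (T.tr d 1)) ?_
  calc T.tr e 1 * T.res d (T.tr d 1)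
      = T.tr e (1 * T.res e (T.res d (T.tr d 1))) := (T.proj_formula e 1 _).symm
    _ = T.tr e (T.tr d 1) := by rw [one_mul, T.res_comp, hde, T.res_id]
    _ = 1 := by rw [T.tr_comp, hed, T.tr_id]

/-- The factor is a unit: `pbSnd j j` is bijective for injective `j`. -/
theorem res_tr_of_injective {X Y : GSet G} (j : GSetHom X Y) (hj : Function.Injective j.toFun)
    (a : T.obj X) : T.res j (T.tr j a) = T.tr (GSet.pbSnd j j) 1 * a := by
  rw [T.tr_bc, GSet.pbFst_self_eq_pbSnd hj, ← T.proj_formula, one_mul]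

theorem res_tr_eq_zero {X Y Z : GSet G} (f : GSetHom X Z) (g : GSetHom Y Z)
    (hfg : ∀ x y, f.toFun x ≠ g.toFun y) (a : T.obj X) : T.res g (T.tr f a) = 0 := by
  have := T.subsingleton_obj ⟨fun q : (GSet.pullback f g).carrier => hfg _ _ q.property⟩
  rw [T.tr_bc, Subsingleton.elim (T.res _ a) 0, map_zero]

variable {T} {I : ∀ X : GSet G, Ideal (T.obj X)}

theorem IsIdeal.mem_iff_res_mem_of_bijective (hI : T.IsIdeal I) {P X : GSet G}
    (e : GSetHom P X) (he : Function.Bijective e.toFun) (t : T.obj X) :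
    t ∈ I X ↔ T.res e t ∈ I P := by
  obtain ⟨d, -, hed⟩ := e.exists_inverse_of_bijective he
  refine ⟨hI.res_mem e, fun h => ?_⟩
  simpa only [T.res_comp, hed, T.res_id] using hI.res_mem d h

theorem IsIdeal.mem_sum_iff (hI : T.IsIdeal I) {X Y : GSet G} (t : T.obj (X.sum Y)) :
    t ∈ I (X.sum Y) ↔ T.res (GSet.inl X Y) t ∈ I X ∧ T.res (GSet.inr X Y) t ∈ I Y := by
  refine ⟨fun h => ⟨hI.res_mem _ h, hI.res_mem _ h⟩, fun ⟨hX, hY⟩ => ?_⟩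
  set j₁ := GSet.inl X Y
  set j₂ := GSet.inr X Y
  have hj₁ : Function.Injective j₁.toFun := Sum.inl_injective
  have hj₂ : Function.Injective j₂.toFun := Sum.inr_injective
  obtain ⟨u₁, hu₁⟩ := T.isUnit_tr_one_of_bijective _ (GSet.bijective_pbSnd_self hj₁)
  obtain ⟨u₂, hu₂⟩ := T.isUnit_tr_one_of_bijective _ (GSet.bijective_pbSnd_self hj₂)
  let s := T.tr j₁ (↑u₁⁻¹ * T.res j₁ t) + T.tr j₂ (↑u₂⁻¹ * T.res j₂ t)
  have hs : s ∈ I (X.sum Y) :=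
    add_mem (hI.tr_mem j₁ (Ideal.mul_mem_left _ _ hX)) (hI.tr_mem j₂ (Ideal.mul_mem_left _ _ hY))
  suffices t = s from this ▸ hs
  refine (T.add_bij X Y).injective (Prod.ext ?_ ?_)
  · change T.res j₁ t = T.res j₁ s
    rw [map_add, T.res_tr_of_injective j₁ hj₁, ← hu₁, u₁.mul_inv_cancel_left,
      T.res_tr_eq_zero j₂ j₁ (fun _ _ => Sum.inr_ne_inl), add_zero]
  · change T.res j₂ t = T.res j₂ s
    rw [map_add, T.res_tr_of_injective j₂ hj₂, ← hu₂, u₂.mul_inv_cancel_left,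
      T.res_tr_eq_zero j₁ j₂ (fun _ _ => Sum.inl_ne_inr), zero_add]

theorem IsIdeal.ext_of_isTransitive {J : ∀ X : GSet G, Ideal (T.obj X)} (hI : T.IsIdeal I)
    (hJ : T.IsIdeal J) (h : ∀ Z : GSet G, Z.IsTransitive → I Z = J Z) : I = J := by
  funext X
  induction hn : Nat.card X.carrier using Nat.strong_induction_on generalizing X with
  | _ n ih =>
  rcases X.isEmpty_or_isTransitive_or_exists_invariant with hX | hX | ⟨p, hp, ⟨y, hy⟩, ⟨y', hy'⟩⟩
  · have := T.subsingleton_obj hX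
    exact Subsingleton.elim _ _
  · exact h X hX
  ext t
  rw [hI.mem_iff_res_mem_of_bijective _ (X.bijective_sumSubtypeCompl p hp),
    hJ.mem_iff_res_mem_of_bijective _ (X.bijective_sumSubtypeCompl p hp),
    hI.mem_sum_iff, hJ.mem_sum_iff,
    ih _ (hn ▸ Finite.card_subtype_lt hy') _ rfl,
    ih _ (hn ▸ Finite.card_subtype_lt (p := fun y => ¬p y) (not_not.2 hy)) _ rfl]

end TambaraFunctor

/-- if `T(X)` is Noetherian for every transitive `X`, then every ascending
chain of ideals of `T` stabilizes. -/
theorem ideal_chain_stabilizes (G : Type) [Group G] [Finite G] (T : TambaraFunctor G)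
    (hNoeth : ∀ X : GSet G, X.IsTransitive → IsNoetherianRing (T.obj X))
    (c : ℕ → ∀ X : GSet G, Ideal (T.obj X)) (hc : ∀ n, T.IsIdeal (c n))
    (hmono : ∀ (n : ℕ) (X : GSet G), c n X ≤ c (n + 1) X) :
    ∃ n₀ : ℕ, ∀ n : ℕ, n₀ ≤ n → c n = c n₀ := by
  have (H : Subgroup G) : IsNoetherianRing (T.obj (GSet.quotient H)) :=
    hNoeth _ (GSet.isTransitive_quotient H)
  obtain ⟨n₀, hn₀⟩ := WellFoundedGT.monotone_chain_condition
    ⟨fun n (H : Subgroup G) => c n (GSet.quotient H), monotone_nat_of_le_succ fun n _ => hmono n _⟩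
  refine ⟨n₀, fun n hn => (hc n).ext_of_isTransitive (hc n₀) fun Z hZ => ?_⟩
  obtain ⟨H, e, he⟩ := hZ.exists_bijective_hom_quotient
  have hH : c n₀ (GSet.quotient H) = c n (GSet.quotient H) := congrFun (hn₀ n hn) H
  ext t
  rw [(hc n).mem_iff_res_mem_of_bijective e he, (hc n₀).mem_iff_res_mem_of_bijective e he, hH]
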